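/- For every positive integer n and integer j with 0 ≤ j ≤ n-1, ∑_{k=j}^{n-1} k³·C(k+2j, 3j) = [j(1+2j) + 2n(j+1)(3j+1) - 2n²(3j+1)(3j+2) + n³(3j+1)(3j+2)] / [(3j+2)(3j+4)] · C(n+2j, 3j+1). -/

import Mathlib

/-! Both sides vanish at `n = 0`, and the right-hand side telescopes: with `a = C(n+2j, 3j)` and
`b = C(n+2j, 3j+1)`, Pascal's rule gives `C(n+1+2j, 3j+1) = a + b`, and eliminating `b` through
`(3j+1) b = (n-j) a` reduces the claim that the increment of the right-hand side is `n³ a` to a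
polynomial identity in `n` and `j`. Terms with `k < j` vanish, so summing from `0` or from `j` gives
the same result. -/

open Finset

lemma Nat.cast_choose_succ_right_mul {K : Type*} [CommRing K] (m k : ℕ) :
    (m.choose (k + 1) : K) * (k + 1) = m.choose k * (m - k) := by
  rcases le_or_gt k m with hkm | hmk
  · rw [← Nat.cast_sub hkm]
    exact_mod_cast congrArg (Nat.cast : ℕ → K) (Nat.choose_succ_right_eq m k)
  · simp [Nat.choose_eq_zero_of_lt hmk, Nat.choose_eq_zero_of_lt (Nat.lt_succ_of_lt hmk)]

theorem sum_range_cube_mul_choose (n j : ℕ) :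
    ∑ k ∈ range n, (k : ℚ) ^ 3 * ((k + 2 * j).choose (3 * j) : ℚ)
      = ((j : ℚ) * (1 + 2 * j) + 2 * n * (j + 1) * (3 * j + 1)
          - 2 * (n : ℚ) ^ 2 * (3 * j + 1) * (3 * j + 2)
          + (n : ℚ) ^ 3 * (3 * j + 1) * (3 * j + 2))
        / ((3 * (j : ℚ) + 2) * (3 * j + 4)) * ((n + 2 * j).choose (3 * j + 1) : ℚ) := by
  induction n with
  | zero => simp [Nat.choose_eq_zero_of_lt (by omega : 2 * j < 3 * j + 1)]
  | succ n ih =>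
    have hpascal : ((n + 1 + 2 * j).choose (3 * j + 1) : ℚ)
        = (n + 2 * j).choose (3 * j) + (n + 2 * j).choose (3 * j + 1) := by
      rw [Nat.add_right_comm, Nat.choose_succ_succ, Nat.cast_add]
    have hratio := Nat.cast_choose_succ_right_mul (K := ℚ) (n + 2 * j) (3 * j)
    rw [sum_range_succ, ih, hpascal]
    push_cast at hratio ⊢
    field_simp
    -- the coefficient is `-(P(n+1) - P(n)) / (3j+1)`, `P` the numerator of the closed form
    linear_combination
      (2 * (2 * n + 1) * (3 * j + 2) - 2 * (j + 1) - (3 * n ^ 2 + 3 * n + 1) * (3 * j + 2) : ℚ)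
        * hratio

theorem stmt_11_general (n j : ℕ) (hn : 1 ≤ n) :
    ∑ k ∈ Finset.Icc j (n - 1), (k : ℚ) ^ 3 * ((k + 2 * j).choose (3 * j) : ℚ)
      = ((j : ℚ) * (1 + 2 * j) + 2 * n * (j + 1) * (3 * j + 1)
          - 2 * (n : ℚ) ^ 2 * (3 * j + 1) * (3 * j + 2)
          + (n : ℚ) ^ 3 * (3 * j + 1) * (3 * j + 2))
        / ((3 * (j : ℚ) + 2) * (3 * j + 4)) * ((n + 2 * j).choose (3 * j + 1) : ℚ) := by
  rw [← sum_range_cube_mul_choose]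
  refine sum_subset (fun k hk ↦ by rw [mem_Icc] at hk; rw [mem_range]; omega) fun k hk hk' ↦ ?_
  have hkj : k < j := by rw [mem_range] at hk; rw [mem_Icc] at hk'; omega
  simp [Nat.choose_eq_zero_of_lt (by omega : k + 2 * j < 3 * j)]

theorem stmt_11 (n j : ℕ) (hn : 1 ≤ n) (hj : j ≤ n - 1) :
    ∑ k ∈ Finset.Icc j (n - 1), (k : ℚ) ^ 3 * ((k + 2 * j).choose (3 * j) : ℚ)
      = ((j : ℚ) * (1 + 2 * j) + 2 * n * (j + 1) * (3 * j + 1)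
          - 2 * (n : ℚ) ^ 2 * (3 * j + 1) * (3 * j + 2)
          + (n : ℚ) ^ 3 * (3 * j + 1) * (3 * j + 2))
        / ((3 * (j : ℚ) + 2) * (3 * j + 4)) * ((n + 2 * j).choose (3 * j + 1) : ℚ) :=
  stmt_11_general n j hn
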